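/- For m ≥ 10, let 𝒰_m be the set of r-tuples (k₁,…,k_r) with 2^{m−1} + m² < k₁ < ⋯ < k_r ≤ 2^m and k_{j+1} − k_j − 1 ≥ (m log 2)² for all 0 ≤ j ≤ r−1 (with k₀ = 1). Then the cardinality of 𝒰_m satisfies #𝒰_m = (2^{r(m−1)}/r!)(1 + o(1)) as m → ∞; in particular, for every ε > 0 there is M such that for all m ≥ M, (1−ε) 2^{r(m−1)}/r! ≤ #𝒰_m ≤ (1+ε) 2^{r(m−1)}/r!. -/

import Mathlib

/-!
An element of `Uset r m` is an increasing `r`-tuple in an interval of length at most `2^(m-1)`,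
so there are at most `binom(2^(m-1), r) ≤ 2^(r(m-1))/r!` of them. Conversely, adding
`m² * i` to the `i`-th entry of an increasing tuple in `[0, 2^(m-1) - r m²)` and shifting past
`2^(m-1) + m²` spreads it out enough to satisfy the gap conditions, since `(m log 2)² ≤ m²`.
This gives at least `binom(2^(m-1) - r m², r) ≥ (2^(m-1) - r m² - r)^r / r!` tuples, and
`r m² = o(2^(m-1))`.
-/

open Filter

/-- The collection `𝒰_m` of `r`-tuples `2^{m-1} + m² < k₁ < ⋯ < k_r ≤ 2^m` whose consecutive
gaps (including the gap from the initial position `k₀ = 1`) satisfy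
`k_{j+1} - k_j - 1 ≥ (log 2^m)² = (m log 2)²`. -/
def Uset (r m : ℕ) : Set (Fin r → ℕ) :=
  {k | StrictMono k ∧ (∀ i : Fin r, k i ≤ 2 ^ m) ∧
    (∀ i : Fin r, (i : ℕ) = 0 → 2 ^ (m - 1) + m ^ 2 < k i ∧
      ((m : ℝ) * Real.log 2) ^ 2 ≤ (k i : ℝ) - 1 - 1) ∧
    ∀ i j : Fin r, (i : ℕ) + 1 = (j : ℕ) →
      ((m : ℝ) * Real.log 2) ^ 2 ≤ (k j : ℝ) - (k i : ℝ) - 1}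

open Topology

section StrictMonoTuples

variable {α : Type*} [LinearOrder α]

lemma finite_setOf_strictMono_mem (s : Finset α) (r : ℕ) :
    {k : Fin r → α | StrictMono k ∧ ∀ i, k i ∈ s}.Finite :=
  (Set.Finite.pi' fun _ => s.finite_toSet).subset fun _ hk => hk.2

lemma ncard_setOf_strictMono_mem (s : Finset α) (r : ℕ) :
    {k : Fin r → α | StrictMono k ∧ ∀ i, k i ∈ s}.ncard = s.card.choose r := by
  classical
  rw [← Finset.card_powersetCard, ← Set.ncard_coe_finset, eq_comm]
  refine Set.ncard_congr
    (fun t ht => ⇑(t.orderEmbOfFin (Finset.mem_powersetCard.1 ht).2)) ?_ ?_ ?_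
  · intro t ht
    exact ⟨(t.orderEmbOfFin _).strictMono,
      fun i => (Finset.mem_powersetCard.1 ht).1 (t.orderEmbOfFin_mem _ i)⟩
  · intro t t' ht ht' h
    rw [← Finset.coe_inj, ← t.range_orderEmbOfFin (Finset.mem_powersetCard.1 ht).2,
      ← t'.range_orderEmbOfFin (Finset.mem_powersetCard.1 ht').2, h]
  · rintro k ⟨hk, hks⟩
    have hcard : (Finset.univ.image k).card = r := by
      rw [Finset.card_image_of_injective _ hk.injective, Finset.card_univ, Fintype.card_fin]
    refine ⟨Finset.univ.image k, ?_, ?_⟩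
    · rw [Finset.mem_coe, Finset.mem_powersetCard]
      exact ⟨fun x hx => by obtain ⟨i, -, rfl⟩ := Finset.mem_image.1 hx; exact hks i, hcard⟩
    · exact (Finset.orderEmbOfFin_unique hcard
        (fun i => Finset.mem_image_of_mem k (Finset.mem_univ i)) hk).symm

end StrictMonoTuples

lemma Uset_subset_strictMono_Ioc (r m : ℕ) :
    Uset r m ⊆
      {k | StrictMono k ∧ ∀ i, k i ∈ Finset.Ioc (2 ^ (m - 1) + m ^ 2) (2 ^ m)} := by
  rintro k ⟨hk, hle, hfirst, -⟩
  refine ⟨hk, fun i => Finset.mem_Ioc.2 ⟨?_, hle i⟩⟩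
  have h0 := (hfirst ⟨0, i.pos⟩ rfl).1
  exact h0.trans_le (hk.monotone (Fin.le_def.2 (Nat.zero_le _)))

lemma card_Uset_le (r m : ℕ) :
    (Nat.card (Uset r m) : ℝ) ≤ (2 : ℝ) ^ (r * (m - 1)) / r.factorial := by
  have hlen : 2 ^ m - (2 ^ (m - 1) + m ^ 2) ≤ 2 ^ (m - 1) := by
    have : 2 ^ m ≤ 2 * 2 ^ (m - 1) := by
      rw [← pow_succ']
      exact Nat.pow_le_pow_right two_pos (by omega)
    omega
  have hcard : Nat.card (Uset r m) ≤ (2 ^ (m - 1)).choose r := by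
    rw [Nat.card_coe_set_eq]
    calc (Uset r m).ncard ≤ _ := Set.ncard_le_ncard (Uset_subset_strictMono_Ioc r m)
          (finite_setOf_strictMono_mem _ r)
      _ = _ := by rw [ncard_setOf_strictMono_mem, Nat.card_Ioc]
      _ ≤ _ := Nat.choose_le_choose r hlen
  calc (Nat.card (Uset r m) : ℝ) ≤ ((2 ^ (m - 1)).choose r : ℕ) := by exact_mod_cast hcard
    _ ≤ ((2 ^ (m - 1) : ℕ) : ℝ) ^ r / r.factorial := Nat.choose_le_pow_div r _
    _ = (2 : ℝ) ^ (r * (m - 1)) / r.factorial := by rw [pow_mul']; push_cast; rfl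

lemma sq_mul_log_two_le_of_add_le {a b m : ℕ} (h : a + m ^ 2 + 1 ≤ b) :
    ((m : ℝ) * Real.log 2) ^ 2 ≤ (b : ℝ) - a - 1 := by
  have hlog : Real.log 2 ^ 2 ≤ 1 := by
    have := Real.log_two_lt_d9
    have := Real.log_nonneg one_le_two
    nlinarith
  have hb : (a : ℝ) + m ^ 2 + 1 ≤ b := by exact_mod_cast h
  nlinarith [sq_nonneg (m : ℝ)]

def spreadTuple {r : ℕ} (m : ℕ) (k : Fin r → ℕ) : Fin r → ℕ :=
  fun i => 2 ^ (m - 1) + m ^ 2 + 1 + m ^ 2 * i + k i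

lemma spreadTuple_injective (r m : ℕ) : Function.Injective (spreadTuple (r := r) m) :=
  fun k k' h => funext fun i => by have := congrFun h i; simp only [spreadTuple] at this; omega

lemma spreadTuple_mem_Uset {r m N : ℕ} (hm : 1 ≤ m) (hN : r * m ^ 2 + N ≤ 2 ^ (m - 1))
    {k : Fin r → ℕ} (hk : StrictMono k) (hkN : ∀ i, k i < N) :
    spreadTuple m k ∈ Uset r m := by
  have h2m : 2 ^ m = 2 * 2 ^ (m - 1) := by rw [← pow_succ']; congr 1; omega
  refine ⟨fun i j hij => ?_, fun i => ?_, fun i hi => ?_, fun i j hij => ?_⟩ <;>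
    simp only [spreadTuple]
  · have := Nat.mul_le_mul_left (m ^ 2) hij.le
    have := hk hij
    omega
  · have : m ^ 2 * i + m ^ 2 ≤ r * m ^ 2 := by
      rw [← Nat.mul_succ, Nat.mul_comm r]
      exact Nat.mul_le_mul_left _ i.isLt
    have := hkN i
    omega
  · have h0 : m ^ 2 * (i : ℕ) = 0 := by rw [hi, Nat.mul_zero]
    refine ⟨by omega, ?_⟩
    have := sq_mul_log_two_le_of_add_le (a := 1) (m := m)
      (b := 2 ^ (m - 1) + m ^ 2 + 1 + m ^ 2 * i + k i)
      (by have := @Nat.one_le_two_pow (m - 1); omega)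
    rwa [Nat.cast_one] at this
  · have hlt : i < j := Fin.lt_def.2 (by omega)
    have := hk hlt
    apply sq_mul_log_two_le_of_add_le
    rw [← hij, Nat.mul_succ]
    omega

lemma le_card_Uset (r m : ℕ) (hm : 1 ≤ m) (h : r * m ^ 2 + r ≤ 2 ^ (m - 1)) :
    ((2 : ℝ) ^ (m - 1) - r * m ^ 2 - r) ^ r / r.factorial ≤ Nat.card (Uset r m) := by
  set N := 2 ^ (m - 1) - r * m ^ 2
  have hN : r * m ^ 2 + N ≤ 2 ^ (m - 1) := by omega
  have hspread :
      spreadTuple m '' {k | StrictMono k ∧ ∀ i, k i ∈ Finset.range N} ⊆ Uset r m := by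
    rintro _ ⟨k, ⟨hk, hkN⟩, rfl⟩
    exact spreadTuple_mem_Uset hm hN hk fun i => Finset.mem_range.1 (hkN i)
  have hfinite : (Uset r m).Finite :=
    (finite_setOf_strictMono_mem (Finset.Iic (2 ^ m)) r).subset
      fun k hk => ⟨hk.1, fun i => Finset.mem_Iic.2 (hk.2.1 i)⟩
  have hcard : N.choose r ≤ Nat.card (Uset r m) := by
    rw [Nat.card_coe_set_eq, ← Finset.card_range N, ← ncard_setOf_strictMono_mem,
      ← Set.ncard_image_of_injective _ (spreadTuple_injective r m)]
    exact Set.ncard_le_ncard hspread hfinite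
  have hbase : (2 : ℝ) ^ (m - 1) - r * m ^ 2 - r ≤ ((N + 1 - r : ℕ) : ℝ) := by
    rw [Nat.cast_sub (by omega), Nat.cast_add, Nat.cast_sub (by omega)]
    push_cast
    linarith
  have hnonneg : (0 : ℝ) ≤ (2 : ℝ) ^ (m - 1) - r * m ^ 2 - r := by
    have : ((r * m ^ 2 + r : ℕ) : ℝ) ≤ ((2 ^ (m - 1) : ℕ) : ℝ) := by exact_mod_cast h
    push_cast at this
    linarith
  calc ((2 : ℝ) ^ (m - 1) - r * m ^ 2 - r) ^ r / r.factorial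
      ≤ ((N + 1 - r : ℕ) : ℝ) ^ r / r.factorial := by gcongr
    _ ≤ N.choose r := Nat.pow_le_choose r N
    _ ≤ Nat.card (Uset r m) := by exact_mod_cast hcard

lemma tendsto_gap_div_two_pow (r : ℕ) :
    Tendsto (fun n : ℕ => ((r : ℝ) * (n + 1) ^ 2 + r) / 2 ^ n) atTop (𝓝 0) := by
  have hsq : Tendsto (fun n : ℕ => ((n + 1 : ℕ) : ℝ) ^ 2 / 2 ^ (n + 1)) atTop (𝓝 0) :=
    (tendsto_pow_const_div_const_pow_of_one_lt 2 one_lt_two).comp (tendsto_add_atTop_nat 1)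
  have hinv : Tendsto (fun n : ℕ => ((2 : ℝ) ^ n)⁻¹) atTop (𝓝 0) :=
    tendsto_inv_atTop_zero.comp (tendsto_pow_atTop_atTop_of_one_lt one_lt_two)
  have := (hsq.const_mul (2 * r : ℝ)).add (hinv.const_mul (r : ℝ))
  rw [mul_zero, mul_zero, add_zero] at this
  refine this.congr fun n => ?_
  push_cast
  rw [pow_succ]
  field_simp
  ring

lemma one_sub_gap_div_pow_mul_le_card_Uset (r n : ℕ)
    (hfit : ((r : ℝ) * (n + 1) ^ 2 + r) / 2 ^ n ≤ 1) :
    (1 - ((r : ℝ) * (n + 1) ^ 2 + r) / 2 ^ n) ^ r * 2 ^ (r * n) / r.factorial ≤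
      (Nat.card (Uset r (n + 1)) : ℝ) := by
  have hpos : (0 : ℝ) < 2 ^ n := by positivity
  have hfit' : r * (n + 1) ^ 2 + r ≤ 2 ^ n := by
    rw [div_le_one hpos] at hfit
    exact_mod_cast hfit
  calc (1 - ((r : ℝ) * (n + 1) ^ 2 + r) / 2 ^ n) ^ r * 2 ^ (r * n) / r.factorial
      = ((2 : ℝ) ^ n - r * (n + 1) ^ 2 - r) ^ r / r.factorial := by
        rw [pow_mul', ← mul_pow]
        congr 2
        field_simp
        ring
    _ ≤ (Nat.card (Uset r (n + 1)) : ℝ) := by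
        simpa using le_card_Uset r (n + 1) (by omega) (by simpa using hfit')

theorem stmt_16_general (r : ℕ) :
    ∀ ε : ℝ, 0 < ε → ∃ M : ℕ, ∀ m ≥ M,
      (1 - ε) * (2 : ℝ) ^ (r * (m - 1)) / (r.factorial : ℝ) ≤ (Nat.card (Uset r m) : ℝ) ∧
      (Nat.card (Uset r m) : ℝ) ≤ (1 + ε) * (2 : ℝ) ^ (r * (m - 1)) / (r.factorial : ℝ) := by
  intro ε hε
  have hgap := tendsto_gap_div_two_pow r
  have hratio : Tendsto (fun n : ℕ => (1 - ((r : ℝ) * (n + 1) ^ 2 + r) / 2 ^ n) ^ r)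
      atTop (𝓝 1) := by
    simpa using ((tendsto_const_nhds (x := (1 : ℝ))).sub hgap).pow r
  have hε' : 1 - ε < 1 := by linarith
  obtain ⟨N, hN⟩ := eventually_atTop.1 <|
    (hratio.eventually_const_le hε').and (hgap.eventually_le_const one_pos)
  refine ⟨N + 1, fun m hm => ?_⟩
  obtain ⟨n, rfl⟩ : ∃ n, m = n + 1 := ⟨m - 1, by omega⟩
  obtain ⟨hclose, hfit⟩ := hN n (by omega)
  rw [Nat.add_sub_cancel]
  constructor
  · calc (1 - ε) * (2 : ℝ) ^ (r * n) / r.factorial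
        ≤ (1 - ((r : ℝ) * (n + 1) ^ 2 + r) / 2 ^ n) ^ r * 2 ^ (r * n) / r.factorial := by
          gcongr
      _ ≤ Nat.card (Uset r (n + 1)) := one_sub_gap_div_pow_mul_le_card_Uset r n hfit
  · calc (Nat.card (Uset r (n + 1)) : ℝ) ≤ (2 : ℝ) ^ (r * n) / r.factorial := by
          simpa using card_Uset_le r (n + 1)
      _ ≤ (1 + ε) * (2 : ℝ) ^ (r * n) / r.factorial := by
          gcongr
          exact le_mul_of_one_le_left (by positivity) (by linarith)

theorem stmt_16 (r : ℕ) (hr : 1 ≤ r) :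
    ∀ ε : ℝ, 0 < ε → ∃ M : ℕ, ∀ m ≥ M,
      (1 - ε) * (2 : ℝ) ^ (r * (m - 1)) / (r.factorial : ℝ) ≤ (Nat.card (Uset r m) : ℝ) ∧
      (Nat.card (Uset r m) : ℝ) ≤ (1 + ε) * (2 : ℝ) ^ (r * (m - 1)) / (r.factorial : ℝ) :=
  stmt_16_general r
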